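/- arXiv:1805.04916 — 2 statements merged into one kernel-verified Lean document; each statement's English description precedes it below -/
import Mathlib

section
/- Let γ be a normalized profile function of length ℓ satisfying the equatorial symmetry γ(t) = γ(ℓ − t) for all t ∈ [0,ℓ], and suppose the Gaussian curvature K(t) = −γ''(t)/γ(t) is monotone non-decreasing on (0, ℓ/2]. Then Γ(t) + γ'(t) ≥ 0 for every t ∈ [0, ℓ/2]. -/
/-- A profile function of length `ℓ`: a `C^∞` function `γ` with `γ(0) = γ(ℓ) = 0`,
`γ > 0` on `(0,ℓ)`, `γ'(0) = 1`, `γ'(ℓ) = -1`, `|γ'| < 1` on `(0,ℓ)`, and all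
even-order derivatives of `γ` vanishing at `t = 0` and `t = ℓ`. -/
structure IsProfileFunction (ℓ : ℝ) (γ : ℝ → ℝ) : Prop where
  ell_pos : 0 < ℓ
  smooth : ContDiff ℝ (⊤ : ℕ∞) γ
  zero_left : γ 0 = 0
  zero_right : γ ℓ = 0
  pos : ∀ t ∈ Set.Ioo 0 ℓ, 0 < γ t
  deriv_left : deriv γ 0 = 1
  deriv_right : deriv γ ℓ = -1
  abs_deriv_lt_one : ∀ t ∈ Set.Ioo 0 ℓ, |deriv γ t| < 1
  even_deriv_left : ∀ n : ℕ, iteratedDeriv (2 * n) γ 0 = 0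
  even_deriv_right : ∀ n : ℕ, iteratedDeriv (2 * n) γ ℓ = 0

/-- The profile function is normalized: `∫₀^ℓ γ(t) dt = 2`, so the associated surface
of revolution has area `4π`. -/
def IsNormalizedProfile (ℓ : ℝ) (γ : ℝ → ℝ) : Prop :=
  (∫ t in (0:ℝ)..ℓ, γ t) = 2

/-- `Γ(t) = -1 + ∫₀^t γ(s) ds`. -/
noncomputable def Gam (γ : ℝ → ℝ) (t : ℝ) : ℝ :=
  -1 + ∫ s in (0:ℝ)..t, γ s

/-!
Put `F = Γ + γ'`. Then `F' = γ + γ'' = γ (1 - K)`, `F 0 = -1 + 1 = 0`, and by the equatorial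
symmetry `Γ (ℓ/2) = 0` and `γ' (ℓ/2) = 0`, so `F (ℓ/2) = 0`. Since `K` is non-decreasing, `F'`
changes sign at most once on `(0, ℓ/2)`, from `+` to `-`; hence `F` first increases, then
decreases, and stays above its boundary value `0`.
-/

open Set Filter Topology

theorem nonneg_of_deriv_neg_imp_nonpos {F : ℝ → ℝ} {a b : ℝ}
    (hcont : ContinuousOn F (Icc a b)) (hdiff : DifferentiableOn ℝ F (Ioo a b))
    (ha : 0 ≤ F a) (hb : 0 ≤ F b)
    (hsign : ∀ s ∈ Ioo a b, ∀ x ∈ Ioo a b, s ≤ x → deriv F s < 0 → deriv F x ≤ 0) :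
    ∀ t ∈ Icc a b, 0 ≤ F t := by
  rintro t ⟨hat, htb⟩
  by_cases hinc : ∀ s ∈ Ioo a t, 0 ≤ deriv F s
  · have hmono : MonotoneOn F (Icc a t) := by
      refine monotoneOn_of_deriv_nonneg (convex_Icc a t)
        (hcont.mono (Icc_subset_Icc_right htb)) ?_ ?_ <;> rw [interior_Icc]
      · exact hdiff.mono (Ioo_subset_Ioo_right htb)
      · exact hinc
    exact ha.trans (hmono (left_mem_Icc.2 hat) (right_mem_Icc.2 hat) hat)
  · push Not at hinc
    obtain ⟨s, hs, hFs⟩ := hinc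
    have hanti : AntitoneOn F (Icc t b) := by
      refine antitoneOn_of_deriv_nonpos (convex_Icc t b)
        (hcont.mono (Icc_subset_Icc_left hat)) ?_ ?_ <;> rw [interior_Icc]
      · exact hdiff.mono (Ioo_subset_Ioo_left hat)
      · intro x hx
        exact hsign s ⟨hs.1, hs.2.trans_le htb⟩ x ⟨hs.1.trans (hs.2.trans hx.1), hx.2⟩
          (hs.2.trans hx.1).le hFs
    exact hb.trans (hanti (left_mem_Icc.2 htb) (right_mem_Icc.2 htb) htb)

-- No differentiability is needed: otherwise `deriv f (a / 2) = 0` by convention.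
theorem deriv_eq_zero_of_eventuallyEq_comp_const_sub {f : ℝ → ℝ} {a : ℝ}
    (h : f =ᶠ[𝓝 (a / 2)] fun x => f (a - x)) : deriv f (a / 2) = 0 := by
  have hrefl : deriv f (a / 2) = -deriv f (a / 2) :=
    calc deriv f (a / 2) = deriv (fun x => f (a - x)) (a / 2) := h.deriv_eq
      _ = -deriv f (a / 2) := by rw [deriv_comp_const_sub, sub_half]
  linarith

theorem integral_half_eq_of_symm {f : ℝ → ℝ} {ℓ : ℝ} (hf : Continuous f) (hℓ : 0 ≤ ℓ)
    (hsym : ∀ t ∈ Icc 0 ℓ, f t = f (ℓ - t)) :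
    2 * ∫ t in (0 : ℝ)..ℓ / 2, f t = ∫ t in (0 : ℝ)..ℓ, f t := by
  have hupper : ∫ t in ℓ / 2..ℓ, f t = ∫ t in (0 : ℝ)..ℓ / 2, f t := by
    calc ∫ t in ℓ / 2..ℓ, f t = ∫ t in ℓ / 2..ℓ, f (ℓ - t) := by
          refine intervalIntegral.integral_congr fun x hx => hsym x ?_
          rw [uIcc_of_le (by linarith)] at hx
          exact ⟨by linarith [hx.1], hx.2⟩
      _ = ∫ t in (0 : ℝ)..ℓ / 2, f t := by
          rw [intervalIntegral.integral_comp_sub_left f ℓ, sub_self, sub_half]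
  rw [← intervalIntegral.integral_add_adjacent_intervals (hf.intervalIntegrable 0 (ℓ / 2))
    (hf.intervalIntegrable (ℓ / 2) ℓ), hupper, two_mul]

theorem Gam_zero (γ : ℝ → ℝ) : Gam γ 0 = -1 := by
  simp [Gam]

theorem Gam_half_eq_zero {ℓ : ℝ} {γ : ℝ → ℝ} (hγ : Continuous γ) (hℓ : 0 ≤ ℓ)
    (hnorm : IsNormalizedProfile ℓ γ) (hsym : ∀ t ∈ Icc 0 ℓ, γ t = γ (ℓ - t)) :
    Gam γ (ℓ / 2) = 0 := by
  have h := integral_half_eq_of_symm hγ hℓ hsym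
  rw [hnorm] at h
  rw [Gam]
  linarith

theorem hasDerivAt_Gam {γ : ℝ → ℝ} (hγ : Continuous γ) (t : ℝ) :
    HasDerivAt (Gam γ) (γ t) t :=
  ((hγ.integral_hasStrictDerivAt 0 t).hasDerivAt).const_add (-1)

theorem hasDerivAt_Gam_add_deriv {γ : ℝ → ℝ} (hγ : ContDiff ℝ 2 γ) (t : ℝ) :
    HasDerivAt (fun u => Gam γ u + deriv γ u) (γ t + deriv (deriv γ) t) t := by
  have hγ' : ContDiff ℝ 1 (deriv γ) := (contDiff_succ_iff_deriv.1 hγ).2.2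
  exact (hasDerivAt_Gam hγ.continuous t).add
    ((hγ'.differentiable one_ne_zero) t).hasDerivAt

/-- If a normalized profile function is symmetric with respect to the
equator and its Gaussian curvature `K = -γ''/γ` is non-decreasing on `(0, ℓ/2]`,
then `Γ t + γ' t ≥ 0` for every `t ∈ [0, ℓ/2]`. -/
theorem stmt_2 (ℓ : ℝ) (γ : ℝ → ℝ)
    (hγ : IsProfileFunction ℓ γ) (hnorm : IsNormalizedProfile ℓ γ)
    (hsym : ∀ t ∈ Set.Icc 0 ℓ, γ t = γ (ℓ - t))
    (hK : ∀ s ∈ Set.Ioc 0 (ℓ / 2), ∀ t ∈ Set.Ioc 0 (ℓ / 2), s ≤ t →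
      -(deriv (deriv γ) s) / γ s ≤ -(deriv (deriv γ) t) / γ t) :
    ∀ t ∈ Set.Icc 0 (ℓ / 2), 0 ≤ Gam γ t + deriv γ t := by
  have hℓ := hγ.ell_pos
  have hγ2 : ContDiff ℝ 2 γ := hγ.smooth.of_le (WithTop.coe_le_coe.2 le_top)
  have hF := hasDerivAt_Gam_add_deriv hγ2
  have hsym_half : γ =ᶠ[𝓝 (ℓ / 2)] fun x => γ (ℓ - x) := by
    filter_upwards [Ioo_mem_nhds (half_pos hℓ) (half_lt_self hℓ)] with x hx
    exact hsym x ⟨hx.1.le, hx.2.le⟩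
  refine nonneg_of_deriv_neg_imp_nonpos (fun x _ => (hF x).continuousAt.continuousWithinAt)
    (fun x _ => (hF x).differentiableAt.differentiableWithinAt) ?_ ?_ ?_
  · simp [Gam_zero, hγ.deriv_left]
  · simp [Gam_half_eq_zero hγ2.continuous hℓ.le hnorm hsym,
      deriv_eq_zero_of_eventuallyEq_comp_const_sub hsym_half]
  · intro s hs x hx hsx hFs
    rw [(hF s).deriv] at hFs
    rw [(hF x).deriv]
    have hγs : 0 < γ s := hγ.pos s ⟨hs.1, hs.2.trans (half_lt_self hℓ)⟩
    have hγx : 0 < γ x := hγ.pos x ⟨hx.1, hx.2.trans (half_lt_self hℓ)⟩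
    -- `γ + γ'' < 0` means `K > 1`, which persists to the right
    have hKs : 1 < -deriv (deriv γ) s / γ s := by rw [one_lt_div hγs]; linarith
    have hKx : 1 < -deriv (deriv γ) x / γ x :=
      hKs.trans_le (hK s ⟨hs.1, hs.2.le⟩ x ⟨hx.1, hx.2.le⟩ hsx)
    rw [one_lt_div hγx] at hKx
    linarith
end

section
/- There exist ℓ > 0, a normalized profile function γ of length ℓ, and a point t₀ ∈ (0,ℓ) with γ'(t₀) ≠ 0 such that γ(t₀)² − γ'(t₀)·Γ(t₀) < 0; equivalently, the action (γ(t₀)² − γ'(t₀)Γ(t₀))/γ'(t₀)² of the invariant measure supported on the periodic orbit over the latitude {t = t₀} at energy parameter m = γ(t₀)/|γ'(t₀)| is negative. (By McDuff's criterion this produces a symplectic magnetic system (S², g, σ) with an energy level not of contact type.) -/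
/-!
Take `γ(t) = sin (k t) · P (cos (k t))` with `k = 2/3` and `P(c) = ((5c² - 2)² + 3) / 8`.
Any such `γ` is odd about `0` and about `π / k`, so its even derivatives vanish there; moreover
`γ' = k (c P - (1 - c²) P')` and `∫₀ᵗ γ = (F 1 - F (cos (k t))) / k` for a primitive `F` of `P`,
with `c = cos (k t)`. The profile conditions thus become polynomial inequalities on `(-1, 1)`:
`P(±1) = 3/2`, `∫₋₁¹ P = 4/3`, `P > 0` and `|c P - (1 - c²) P'| < 3/2`.
At the latitude `cos (k t₀) = 4/5` one gets `γ = 333/1000`, `γ' = -7/25` and `Γ = -1793/2500`,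
so that `γ² - γ' Γ < 0`.
-/

open Real Set

theorem iteratedDeriv_two_mul_eq_zero_of_antisymm {f : ℝ → ℝ} {a : ℝ}
    (hf : ∀ x, f (2 * a - x) = -f x) (n : ℕ) : iteratedDeriv (2 * n) f a = 0 := by
  have hodd : (fun x ↦ f (a + -x)) = fun x ↦ -f (a + x) := by
    funext x
    rw [← hf (a + x)]
    ring_nf
  have h := iteratedDeriv_comp_neg (2 * n) (fun x ↦ f (a + x)) 0
  simp only [hodd, iteratedDeriv_fun_neg, iteratedDeriv_comp_const_add, neg_zero, add_zero,
    pow_mul, neg_one_sq, one_pow, one_smul] at h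
  linarith

theorem cos_mem_Ioo_of_mem_Ioo {x : ℝ} (hx : x ∈ Ioo 0 π) : cos x ∈ Ioo (-1) 1 := by
  have := sin_pos_of_pos_of_lt_pi hx.1 hx.2
  refine abs_lt.1 ((sq_lt_one_iff_abs_lt_one _).1 ?_)
  nlinarith [sin_sq_add_cos_sq x]

noncomputable def sinProfile (k : ℝ) (P : ℝ → ℝ) (t : ℝ) : ℝ := sin (k * t) * P (cos (k * t))

section sinProfile

variable {k : ℝ} {P P' F : ℝ → ℝ}

theorem sinProfile_two_mul_sub (hk : k ≠ 0) (n : ℤ) (t : ℝ) :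
    sinProfile k P (2 * (n * π / k) - t) = -sinProfile k P t := by
  have h : k * (2 * (n * π / k) - t) = n * (2 * π) - k * t := by field_simp
  simp only [sinProfile, h, sin_int_mul_two_pi_sub, cos_int_mul_two_pi_sub, neg_mul]

theorem hasDerivAt_sinProfile (hP : ∀ c, HasDerivAt P (P' c) c) (t : ℝ) :
    HasDerivAt (sinProfile k P)
      (k * (cos (k * t) * P (cos (k * t)) - (1 - cos (k * t) ^ 2) * P' (cos (k * t)))) t := by
  have hkt : HasDerivAt (fun s ↦ k * s) k t := by simpa using (hasDerivAt_id t).const_mul k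
  have h := ((hasDerivAt_sin _).comp t hkt).mul ((hP _).comp t ((hasDerivAt_cos _).comp t hkt))
  refine h.congr_deriv ?_
  simp only [Function.comp_apply]
  linear_combination (-(k * P' (cos (k * t)))) * sin_sq (k * t)

theorem integral_sinProfile (hk : k ≠ 0) (hP : Continuous P) (hF : ∀ c, HasDerivAt F (P c) c)
    (t : ℝ) : ∫ s in (0 : ℝ)..t, sinProfile k P s = (F 1 - F (cos (k * t))) / k := by
  have hkt : ∀ s, HasDerivAt (fun s ↦ k * s) k s := fun s ↦ by
    simpa using (hasDerivAt_id s).const_mul k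
  have hG : ∀ s, HasDerivAt (fun s ↦ -F (cos (k * s)) / k) (sinProfile k P s) s := fun s ↦ by
    have h := (((hF _).comp s ((hasDerivAt_cos _).comp s (hkt s))).neg).div_const k
    refine h.congr_deriv ?_
    simp only [Function.comp_apply, sinProfile]
    field_simp
  have hcont : Continuous (sinProfile k P) := by unfold sinProfile; fun_prop
  rw [intervalIntegral.integral_eq_sub_of_hasDerivAt (fun s _ ↦ hG s)
    (hcont.intervalIntegrable 0 t)]
  simp only [mul_zero, cos_zero]
  ring

theorem isProfileFunction_sinProfile (hk : 0 < k) (hP : ContDiff ℝ (⊤ : ℕ∞) P)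
    (hP' : ∀ c, HasDerivAt P (P' c) c) (hP1 : P 1 = 1 / k) (hPm1 : P (-1) = 1 / k)
    (hpos : ∀ c ∈ Ioo (-1) 1, 0 < P c)
    (hslope : ∀ c ∈ Ioo (-1) 1, |c * P c - (1 - c ^ 2) * P' c| < 1 / k) :
    IsProfileFunction (π / k) (sinProfile k P) := by
  have hkπ : k * (π / k) = π := mul_div_cancel₀ π hk.ne'
  have hIoo : ∀ t ∈ Ioo 0 (π / k), k * t ∈ Ioo 0 π := fun t ht ↦
    ⟨mul_pos hk ht.1, hkπ ▸ mul_lt_mul_of_pos_left ht.2 hk⟩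
  have heven (n : ℤ) (m : ℕ) : iteratedDeriv (2 * m) (sinProfile k P) (n * π / k) = 0 :=
    iteratedDeriv_two_mul_eq_zero_of_antisymm (sinProfile_two_mul_sub hk.ne' n) m
  refine ⟨div_pos pi_pos hk, ?_, ?_, ?_, fun t ht ↦ ?_, ?_, ?_, fun t ht ↦ ?_,
    fun m ↦ by simpa using heven 0 m, fun m ↦ by simpa using heven 1 m⟩
  · unfold sinProfile
    fun_prop
  · simp [sinProfile]
  · simp [sinProfile, hkπ]
  · exact mul_pos (sin_pos_of_pos_of_lt_pi (hIoo t ht).1 (hIoo t ht).2)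
      (hpos _ (cos_mem_Ioo_of_mem_Ioo (hIoo t ht)))
  · simp [(hasDerivAt_sinProfile hP' 0).deriv, hP1, hk.ne']
  · simp [(hasDerivAt_sinProfile hP' (π / k)).deriv, hkπ, hPm1, hk.ne']
  · rw [(hasDerivAt_sinProfile hP' t).deriv, abs_mul, abs_of_pos hk]
    calc k * |_| < k * (1 / k) :=
          mul_lt_mul_of_pos_left (hslope _ (cos_mem_Ioo_of_mem_Ioo (hIoo t ht))) hk
      _ = 1 := mul_one_div_cancel hk.ne'

theorem isNormalizedProfile_sinProfile (hk : k ≠ 0) (hP : Continuous P)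
    (hF : ∀ c, HasDerivAt F (P c) c) (hFk : F 1 - F (-1) = 2 * k) :
    IsNormalizedProfile (π / k) (sinProfile k P) := by
  rw [IsNormalizedProfile, integral_sinProfile hk hP hF, mul_div_cancel₀ π hk, cos_pi, hFk,
    mul_div_cancel_right₀ 2 hk]

theorem gam_sinProfile (hk : k ≠ 0) (hP : Continuous P) (hF : ∀ c, HasDerivAt F (P c) c)
    (t : ℝ) : Gam (sinProfile k P) t = -1 + (F 1 - F (cos (k * t))) / k := by
  rw [Gam, integral_sinProfile hk hP hF]

end sinProfile

noncomputable def witnessPoly (c : ℝ) : ℝ := ((5 * c ^ 2 - 2) ^ 2 + 3) / 8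

noncomputable def witnessProfile : ℝ → ℝ := sinProfile (2 / 3) witnessPoly

theorem continuous_witnessPoly : Continuous witnessPoly := by
  unfold witnessPoly
  fun_prop

theorem hasDerivAt_witnessPoly (c : ℝ) :
    HasDerivAt witnessPoly (5 * c * (5 * c ^ 2 - 2) / 2) c := by
  have h := ((((hasDerivAt_pow 2 c).const_mul 5).sub_const 2).pow 2).add_const 3 |>.div_const 8
  refine h.congr_deriv ?_
  push_cast
  ring

theorem hasDerivAt_witnessPoly_primitive (c : ℝ) :
    HasDerivAt (fun c ↦ (15 * c ^ 5 - 20 * c ^ 3 + 21 * c) / 24) (witnessPoly c) c := by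
  have h := ((((hasDerivAt_pow 5 c).const_mul 15).sub ((hasDerivAt_pow 3 c).const_mul 20)).add
    ((hasDerivAt_id c).const_mul 21)).div_const 24
  refine h.congr_deriv ?_
  simp only [witnessPoly]
  push_cast
  ring

/-- `3/2 ∓ (c P - (1 - c²) P')` factors as `(1 ∓ c) f(±c) / 8`, where
`f(c) = 125 c⁴ + 125 c³ - 35 c² - 35 c + 12 = 125 (c² + c/2 - 7/25)² + 15 c²/4 + 11/5`. -/
theorem abs_witnessPoly_slope_lt {c : ℝ} (hc : c ∈ Ioo (-1) 1) :
    |c * witnessPoly c - (1 - c ^ 2) * (5 * c * (5 * c ^ 2 - 2) / 2)| < 3 / 2 := by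
  have hf : ∀ x : ℝ, 0 < 125 * (x ^ 2 + x / 2 - 7 / 25) ^ 2 + 15 * x ^ 2 / 4 + 11 / 5 :=
    fun x ↦ by positivity
  have h₁ := mul_pos (sub_pos.2 hc.2) (hf c)
  have h₂ := mul_pos (neg_lt_iff_pos_add'.1 hc.1) (hf (-c))
  rw [abs_lt, witnessPoly]
  constructor
  · linear_combination h₂ / 8
  · linear_combination h₁ / 8

theorem isProfileFunction_witnessProfile : IsProfileFunction (π / (2 / 3)) witnessProfile :=
  isProfileFunction_sinProfile (by norm_num) (by unfold witnessPoly; fun_prop)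
    hasDerivAt_witnessPoly (by norm_num [witnessPoly]) (by norm_num [witnessPoly])
    (fun c _ ↦ by unfold witnessPoly; positivity)
    (fun c hc ↦ by simpa [one_div] using abs_witnessPoly_slope_lt hc)

theorem isNormalizedProfile_witnessProfile : IsNormalizedProfile (π / (2 / 3)) witnessProfile :=
  isNormalizedProfile_sinProfile (by norm_num) continuous_witnessPoly
    hasDerivAt_witnessPoly_primitive (by norm_num)

theorem cos_two_thirds_mul_arccos : cos (2 / 3 * (arccos (4 / 5) / (2 / 3))) = 4 / 5 := by
  rw [mul_div_cancel₀ _ (by norm_num), cos_arccos (by norm_num) (by norm_num)]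

theorem sin_two_thirds_mul_arccos : sin (2 / 3 * (arccos (4 / 5) / (2 / 3))) = 3 / 5 := by
  rw [mul_div_cancel₀ _ (by norm_num), sin_arccos,
    show (1 : ℝ) - (4 / 5) ^ 2 = (3 / 5) ^ 2 by norm_num, sqrt_sq (by norm_num)]

theorem witnessProfile_arccos : witnessProfile (arccos (4 / 5) / (2 / 3)) = 333 / 1000 := by
  rw [witnessProfile, sinProfile, cos_two_thirds_mul_arccos, sin_two_thirds_mul_arccos,
    witnessPoly]
  norm_num

theorem deriv_witnessProfile_arccos :
    deriv witnessProfile (arccos (4 / 5) / (2 / 3)) = -7 / 25 := by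
  rw [witnessProfile, (hasDerivAt_sinProfile hasDerivAt_witnessPoly _).deriv,
    cos_two_thirds_mul_arccos, witnessPoly]
  norm_num

theorem gam_witnessProfile_arccos :
    Gam witnessProfile (arccos (4 / 5) / (2 / 3)) = -1793 / 2500 := by
  rw [witnessProfile, gam_sinProfile (by norm_num) continuous_witnessPoly
    hasDerivAt_witnessPoly_primitive, cos_two_thirds_mul_arccos]
  norm_num

/-- There exist a normalized profile function `γ` of some length `ℓ > 0`
and a point `t₀ ∈ (0,ℓ)` with `γ' t₀ ≠ 0` such that
`γ t₀ ^ 2 − γ' t₀ · Γ t₀ < 0`; equivalently the action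
`(γ t₀ ^ 2 − γ' t₀ · Γ t₀) / (γ' t₀)²` of the invariant measure supported on the
periodic orbit over the latitude `{t = t₀}` at energy parameter
`m = γ t₀ / |γ' t₀|` is negative. -/
theorem stmt_12 :
    ∃ ℓ : ℝ, ∃ γ : ℝ → ℝ, 0 < ℓ ∧ IsProfileFunction ℓ γ ∧ IsNormalizedProfile ℓ γ ∧
      ∃ t₀ ∈ Set.Ioo 0 ℓ, deriv γ t₀ ≠ 0 ∧
        γ t₀ ^ 2 - deriv γ t₀ * Gam γ t₀ < 0 ∧
        (γ t₀ ^ 2 - deriv γ t₀ * Gam γ t₀) / (deriv γ t₀) ^ 2 < 0 := by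
  have ht₀ : arccos (4 / 5) / (2 / 3) ∈ Ioo 0 (π / (2 / 3)) :=
    ⟨div_pos (arccos_pos.2 (by norm_num)) (by norm_num),
      div_lt_div_of_pos_right (arccos_lt_pi.2 (by norm_num)) (by norm_num)⟩
  refine ⟨π / (2 / 3), witnessProfile, isProfileFunction_witnessProfile.ell_pos,
    isProfileFunction_witnessProfile, isNormalizedProfile_witnessProfile, _, ht₀, ?_⟩
  rw [witnessProfile_arccos, deriv_witnessProfile_arccos, gam_witnessProfile_arccos]
  norm_num
end
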